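/- Let G be a finite simple graph, and let S, T, T' be pairwise disjoint sets of vertices such that every neighbor of a vertex of T lies in T ∪ S and every neighbor of a vertex of T' lies in T' ∪ S. Then for every u ∈ T and every v ∈ T', the extended distance satisfies edist_G(u, v) = inf over pairs s, s' ∈ S of ( edist_{G[S ∪ T]}(u, s) + edist_G(s, s') + edist_{G[S ∪ T']}(s', v) ). -/

import Mathlib

/-!
`≤` is the triangle inequality, as passing to an induced subgraph only lengthens distances.
For `≥`, follow a shortest `u`–`v` walk: while it stays in `T` its next vertex lies in
`T ∪ S`, and it cannot stay in `T` all the way to `v ∈ T'`, so it enters `S` at some `s` after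
a stretch inside `G[S ∪ T]`. The same argument along a shortest `v`–`s` walk yields `s'`.
-/

namespace SimpleGraph

variable {V W : Type*} {G : SimpleGraph V} {H : SimpleGraph W}

theorem Hom.edist_le (f : G →g H) (u v : V) : H.edist (f u) (f v) ≤ G.edist u v := by
  rcases eq_or_ne (G.edist u v) ⊤ with h | h
  · simp [h]
  · obtain ⟨p, hp⟩ := exists_walk_of_edist_ne_top h
    rw [← hp, ← p.length_map f]
    exact SimpleGraph.edist_le _

theorem edist_le_edist_induce (s : Set V) (x y : s) :
    G.edist x y ≤ (G.induce s).edist x y :=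
  (Embedding.induce s).toHom.edist_le x y

variable {S A : Set V}

theorem Walk.exists_edist_induce_add_edist_le (hA : ∀ x ∈ A, ∀ y, G.Adj x y → y ∈ A ∪ S)
    {u w : V} (p : G.Walk u w) (hu : u ∈ A) (hw : w ∈ A → w ∈ S) :
    ∃ s : S, (G.induce (S ∪ A)).edist ⟨u, .inr hu⟩ ⟨s, .inl s.2⟩ + G.edist s w ≤ p.length := by
  induction p with
  | nil => exact ⟨⟨_, hw hu⟩, by simp⟩
  | @cons u x w hux p ih =>
    rw [length_cons, Nat.cast_succ, add_comm _ 1]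
    rcases hA u hu x hux with hx | hx
    · obtain ⟨s, hs⟩ := ih hx hw
      have hux' : (G.induce (S ∪ A)).Adj ⟨u, .inr hu⟩ ⟨x, .inr hx⟩ := hux
      refine ⟨s, ?_⟩
      calc _ ≤ (1 + (G.induce (S ∪ A)).edist ⟨x, .inr hx⟩ ⟨s, .inl s.2⟩) + G.edist s w := by
            gcongr
            exact SimpleGraph.edist_triangle.trans (by rw [edist_eq_one_iff_adj.2 hux'])
        _ ≤ _ := by rw [add_assoc]; gcongr
    · have hux' : (G.induce (S ∪ A)).Adj ⟨u, .inr hu⟩ ⟨x, .inl hx⟩ := hux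
      exact ⟨⟨x, hx⟩, add_le_add (edist_eq_one_iff_adj.2 hux').le (edist_le p)⟩

theorem Reachable.exists_edist_induce_add_edist_le (hA : ∀ x ∈ A, ∀ y, G.Adj x y → y ∈ A ∪ S)
    {u w : V} (h : G.Reachable u w) (hu : u ∈ A) (hw : w ∈ A → w ∈ S) :
    ∃ s : S, (G.induce (S ∪ A)).edist ⟨u, .inr hu⟩ ⟨s, .inl s.2⟩ + G.edist s w ≤ G.edist u w := by
  obtain ⟨p, hp⟩ := h.exists_walk_length_eq_edist
  rw [← hp]
  exact p.exists_edist_induce_add_edist_le hA hu hw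

end SimpleGraph

open SimpleGraph

theorem edist_T_to_T'_general {V : Type*} (G : SimpleGraph V) (S T T' : Set V)
    (hTT' : Disjoint T T')
    (hT : ∀ v ∈ T, ∀ w, G.Adj v w → w ∈ T ∪ S)
    (hT' : ∀ v ∈ T', ∀ w, G.Adj v w → w ∈ T' ∪ S)
    (u v : V) (hu : u ∈ T) (hv : v ∈ T') :
    G.edist u v =
      ⨅ s : S, ⨅ s' : S,
        ((G.induce (S ∪ T)).edist ⟨u, Set.mem_union_right S hu⟩
            ⟨(s : V), Set.mem_union_left T s.2⟩ +
          G.edist s s' +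
          (G.induce (S ∪ T')).edist ⟨(s' : V), Set.mem_union_left T' s'.2⟩
            ⟨v, Set.mem_union_right S hv⟩) := by
  refine le_antisymm (le_iInf₂ fun s s' => ?_) ?_
  · calc G.edist u v ≤ G.edist u s + G.edist s v := SimpleGraph.edist_triangle
      _ ≤ G.edist u s + (G.edist s s' + G.edist s' v) := by gcongr; exact SimpleGraph.edist_triangle
      _ ≤ _ := by rw [← add_assoc]; gcongr <;> exact edist_le_edist_induce _ _ _
  by_cases huv : G.Reachable u v
  swap
  · simp [edist_eq_top_of_not_reachable huv]
  obtain ⟨s, hs⟩ :=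
    huv.exists_edist_induce_add_edist_le hT hu fun hvT => (hTT'.ne_of_mem hvT hv rfl).elim
  have hsv : G.Reachable s v := edist_ne_top_iff_reachable.1 <|
    ne_top_of_le_ne_top (edist_ne_top_iff_reachable.2 huv) (le_add_self.trans hs)
  obtain ⟨s', hs'⟩ := hsv.symm.exists_edist_induce_add_edist_le hT' hv fun _ => s.2
  rw [SimpleGraph.edist_comm, SimpleGraph.edist_comm (u := v), SimpleGraph.edist_comm (u := s'.1),
    add_comm] at hs'
  refine (iInf₂_le s s').trans (le_trans ?_ hs)
  rw [add_assoc]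
  gcongr

/-- If `T` and `T'` are unions of connected components of `G - S`, then for `u ∈ T` and
`v ∈ T'`, the distance from `u` to `v` in `G` is the infimum over `s, s' ∈ S` of the distance
from `u` to `s` in `G[S ∪ T]`, plus the distance from `s` to `s'` in `G`, plus the distance
from `s'` to `v` in `G[S ∪ T']`. -/
theorem edist_T_to_T' {V : Type*} (G : SimpleGraph V) (S T T' : Set V)
    (hST : Disjoint S T) (hST' : Disjoint S T') (hTT' : Disjoint T T')
    (hT : ∀ v ∈ T, ∀ w, G.Adj v w → w ∈ T ∪ S)
    (hT' : ∀ v ∈ T', ∀ w, G.Adj v w → w ∈ T' ∪ S)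
    (u v : V) (hu : u ∈ T) (hv : v ∈ T') :
    G.edist u v =
      ⨅ s : S, ⨅ s' : S,
        ((G.induce (S ∪ T)).edist ⟨u, Set.mem_union_right S hu⟩
            ⟨(s : V), Set.mem_union_left T s.2⟩ +
          G.edist s s' +
          (G.induce (S ∪ T')).edist ⟨(s' : V), Set.mem_union_left T' s'.2⟩
            ⟨v, Set.mem_union_right S hv⟩) :=
  edist_T_to_T'_general G S T T' hTT' hT hT' u v hu hv
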